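/- If φ = f/g where f and g are Blaschke products of degrees d_f and d_g, and the Pick matrix of φ at points λ_1,...,λ_N ∈ 𝔻 (at which g does not vanish) has π positive and ν negative eigenvalues, then d_f ≥ π and d_g ≥ ν. -/

import Mathlib

/-!
Each Blaschke factor has a rank-one Pick kernel, and Pick kernels of products satisfy
`K_{φψ}(z, w) = K_φ(z, w) + φ(z) K_ψ(z, w) conj φ(w)`; hence the Pick matrix of a Blaschke
product of degree `d` is a Gram matrix `W Wᴴ` with `d` columns. The identity
`1 - φ(z) conj φ(w) = g(z)⁻¹ conj g(w)⁻¹ ((1 - f(z) conj f(w)) - (1 - g(z) conj g(w)))`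
then writes the Pick matrix of `f / g` as `X Xᴴ - Y Yᴴ`, with `d_f` columns in `X` and `d_g` in
`Y`. On `ker Xᴴ`, of codimension at most `d_f`, the quadratic form is `≤ 0`, so this kernel
meets the span of the eigenvectors of positive eigenvalues trivially and `π ≤ d_f`;
symmetrically `ν ≤ d_g`.
-/

/-- A finite Blaschke product with unimodular constant `c` and zeros `a k`. -/
noncomputable def blaschke {m : ℕ} (c : ℂ) (a : Fin m → ℂ) : ℂ → ℂ :=
  fun z => c * ∏ k, (z - a k) / (1 - (starRingEnd ℂ) (a k) * z)

/-- The Pick matrix of φ at the nodes l i. -/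
noncomputable def pickMatrix {N : ℕ} (φ : ℂ → ℂ) (l : Fin N → ℂ) :
    Matrix (Fin N) (Fin N) ℂ :=
  Matrix.of fun i j => (1 - φ (l i) * star (φ (l j))) / (1 - l i * star (l j))

/-- number of positive eigenvalues (with multiplicity) of a Hermitian matrix -/
noncomputable def posCount {n : Type*} [Fintype n] [DecidableEq n]
    {A : Matrix n n ℂ} (hA : A.IsHermitian) : ℕ :=
  (Finset.univ.filter fun i => 0 < hA.eigenvalues i).card

/-- number of negative eigenvalues -/
noncomputable def negCount {n : Type*} [Fintype n] [DecidableEq n]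
    {A : Matrix n n ℂ} (hA : A.IsHermitian) : ℕ :=
  (Finset.univ.filter fun i => hA.eigenvalues i < 0).card

open Matrix Finset
open scoped ComplexOrder

theorem Matrix.card_le_of_mulVec_eq_zero_imp_sum_normSq_mul_nonpos {ι m : Type*} [Fintype ι]
    [Fintype m] (d : ι → ℝ) (hd : ∀ i, 0 < d i) (B : Matrix m ι ℂ)
    (h : ∀ c, B *ᵥ c = 0 → ∑ i, Complex.normSq (c i) * d i ≤ 0) :
    Fintype.card ι ≤ Fintype.card m := by
  have hinj : Function.Injective B.mulVecLin := by
    rw [← LinearMap.ker_eq_bot, LinearMap.ker_eq_bot']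
    intro c hc
    have hterm : ∀ i, 0 ≤ Complex.normSq (c i) * d i := fun i =>
      mul_nonneg (Complex.normSq_nonneg _) (hd i).le
    have hzero := (Finset.sum_eq_zero_iff_of_nonneg fun i _ => hterm i).1
      (le_antisymm (h c hc) (Finset.sum_nonneg fun i _ => hterm i))
    funext i
    simpa [(hd i).ne'] using hzero i (mem_univ i)
  simpa using LinearMap.finrank_le_finrank_of_injective hinj

theorem Matrix.re_dotProduct_mul_conjTranspose_mulVec_nonneg {n m : Type*} [Fintype n] [Fintype m]
    (X : Matrix n m ℂ) (x : n → ℂ) : 0 ≤ (star x ⬝ᵥ ((X * Xᴴ) *ᵥ x)).re :=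
  (Complex.nonneg_iff.1 ((posSemidef_self_mul_conjTranspose X).dotProduct_mulVec_nonneg x)).1

namespace Matrix.IsHermitian

variable {n : Type*} [Fintype n] [DecidableEq n] {A : Matrix n n ℂ}

noncomputable def eigenvectorsOn (hA : A.IsHermitian) (p : n → Prop) : Matrix n {i // p i} ℂ :=
  (hA.eigenvectorUnitary : Matrix n n ℂ).submatrix id Subtype.val

theorem conjTranspose_eigenvectorsOn_mul_mul (hA : A.IsHermitian) (p : n → Prop)
    [DecidablePred p] :
    (hA.eigenvectorsOn p)ᴴ * A * hA.eigenvectorsOn p =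
      diagonal fun i : {i // p i} => (hA.eigenvalues i : ℂ) := by
  have h := congrArg (fun M : Matrix n n ℂ => M.submatrix (Subtype.val : {i // p i} → n)
    (Subtype.val : {i // p i} → n)) hA.conjStarAlgAut_star_eigenvectorUnitary
  simp only [Unitary.conjStarAlgAut_star_apply] at h
  rw [submatrix_mul _ _ _ id _ Function.bijective_id,
    submatrix_mul _ _ _ id _ Function.bijective_id,
    submatrix_diagonal _ _ Subtype.val_injective] at h
  rwa [eigenvectorsOn, conjTranspose_submatrix, ← star_eq_conjTranspose]

theorem re_dotProduct_mulVec_eigenvectorsOn (hA : A.IsHermitian) (p : n → Prop)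
    [DecidablePred p] (c : {i // p i} → ℂ) :
    (star (hA.eigenvectorsOn p *ᵥ c) ⬝ᵥ (A *ᵥ (hA.eigenvectorsOn p *ᵥ c))).re =
      ∑ i, Complex.normSq (c i) * hA.eigenvalues i := by
  rw [star_mulVec, ← dotProduct_mulVec, mulVec_mulVec, mulVec_mulVec,
    conjTranspose_eigenvectorsOn_mul_mul, dotProduct, Complex.re_sum]
  refine Finset.sum_congr rfl fun i _ => ?_
  rw [mulVec_diagonal, Pi.star_apply, RCLike.star_def, mul_comm, mul_assoc, Complex.mul_conj,
    ← Complex.ofReal_mul, Complex.ofReal_re, mul_comm]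

theorem card_le_of_conjTranspose_mulVec_eq_zero {m : Type*} [Fintype m] (hA : A.IsHermitian)
    (p : n → Prop) [DecidablePred p] (σ : ℝ) (hp : ∀ i, p i → 0 < σ * hA.eigenvalues i)
    (W : Matrix n m ℂ) (h : ∀ x, Wᴴ *ᵥ x = 0 → σ * (star x ⬝ᵥ (A *ᵥ x)).re ≤ 0) :
    #{i | p i} ≤ Fintype.card m := by
  rw [← Fintype.card_subtype]
  refine card_le_of_mulVec_eq_zero_imp_sum_normSq_mul_nonpos (fun i => σ * hA.eigenvalues i)
    (fun i => hp i i.2) (Wᴴ * hA.eigenvectorsOn p) fun c hc => ?_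
  have hx := h (hA.eigenvectorsOn p *ᵥ c) (by rwa [mulVec_mulVec])
  rw [re_dotProduct_mulVec_eigenvectorsOn, Finset.mul_sum] at hx
  simpa only [mul_left_comm σ] using hx

theorem posCount_le {m : Type*} [Fintype m] (hA : A.IsHermitian) (W : Matrix n m ℂ)
    (h : ∀ x, Wᴴ *ᵥ x = 0 → (star x ⬝ᵥ (A *ᵥ x)).re ≤ 0) :
    posCount hA ≤ Fintype.card m :=
  hA.card_le_of_conjTranspose_mulVec_eq_zero _ 1 (fun i hi => by rwa [one_mul]) W
    fun x hx => by rw [one_mul]; exact h x hx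

theorem negCount_le {m : Type*} [Fintype m] (hA : A.IsHermitian) (W : Matrix n m ℂ)
    (h : ∀ x, Wᴴ *ᵥ x = 0 → 0 ≤ (star x ⬝ᵥ (A *ᵥ x)).re) :
    negCount hA ≤ Fintype.card m :=
  hA.card_le_of_conjTranspose_mulVec_eq_zero _ (-1) (fun i hi => by linarith) W
    fun x hx => by linarith [h x hx]

theorem posCount_le_and_negCount_le_of_eq_sub {m k : Type*} [Fintype m] [Fintype k]
    (hA : A.IsHermitian) (X : Matrix n m ℂ) (Y : Matrix n k ℂ) (h : A = X * Xᴴ - Y * Yᴴ) :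
    posCount hA ≤ Fintype.card m ∧ negCount hA ≤ Fintype.card k := by
  constructor
  · refine hA.posCount_le X fun x hx => ?_
    rw [h, sub_mulVec, ← mulVec_mulVec x X, hx, mulVec_zero, zero_sub, dotProduct_neg,
      Complex.neg_re, neg_nonpos]
    exact re_dotProduct_mul_conjTranspose_mulVec_nonneg Y x
  · refine hA.negCount_le Y fun x hx => ?_
    rw [h, sub_mulVec, ← mulVec_mulVec x Y, hx, mulVec_zero, sub_zero]
    exact re_dotProduct_mul_conjTranspose_mulVec_nonneg X x

end Matrix.IsHermitian

theorem Matrix.cons_mul_conjTranspose_cons {n α : Type*} [NonUnitalNonAssocSemiring α]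
    [StarRing α] {m : ℕ} (q : n → α) (V : Matrix n (Fin m) α) :
    (of fun i => Fin.cons (q i) (V i)) * (of fun i => Fin.cons (q i) (V i) : Matrix n _ α)ᴴ =
      vecMulVec q (star q) + V * Vᴴ := by
  ext i j
  simp [mul_apply, Fin.sum_univ_succ, vecMulVec_apply]

open ComplexConjugate

section Pick

noncomputable def blaschkeFactor (a z : ℂ) : ℂ := (z - a) / (1 - conj a * z)

theorem blaschke_succ {m : ℕ} (c : ℂ) (a : Fin (m + 1) → ℂ) (z : ℂ) :
    blaschke c a z = blaschkeFactor (a 0) z * blaschke c (Fin.tail a) z := by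
  simp only [blaschke, blaschkeFactor, Fin.prod_univ_succ, Fin.tail]
  ring

theorem one_sub_mul_conj_ne_zero {z w : ℂ} (hz : ‖z‖ < 1) (hw : ‖w‖ < 1) :
    1 - z * conj w ≠ 0 := by
  refine sub_ne_zero.2 fun h => ?_
  have := congrArg norm h
  rw [norm_one, norm_mul, Complex.norm_conj] at this
  nlinarith [norm_nonneg z, norm_nonneg w]

theorem one_sub_blaschkeFactor_mul_conj {a z w : ℂ} (ha : ‖a‖ < 1) (hz : ‖z‖ < 1)
    (hw : ‖w‖ < 1) :
    1 - blaschkeFactor a z * conj (blaschkeFactor a w) =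
      (1 - (‖a‖ : ℂ) ^ 2) * (1 - z * conj w) /
        ((1 - conj a * z) * conj (1 - conj a * w)) := by
  have hz' := one_sub_mul_conj_ne_zero hz ha
  have hw' : conj (1 - conj a * w) ≠ 0 := by
    simpa using one_sub_mul_conj_ne_zero ha hw
  rw [← Complex.mul_conj', blaschkeFactor, blaschkeFactor, map_div₀]
  simp only [map_sub, map_mul, map_one, Complex.conj_conj] at hw' ⊢
  field_simp
  ring

variable {N : ℕ}

theorem pickMatrix_const {c : ℂ} (hc : ‖c‖ = 1) (l : Fin N → ℂ) :
    pickMatrix (fun _ => c) l = 0 := by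
  ext i j
  simp [pickMatrix, RCLike.star_def, Complex.mul_conj', hc]

theorem pickMatrix_mul (φ ψ : ℂ → ℂ) (l : Fin N → ℂ) :
    pickMatrix (fun z => φ z * ψ z) l =
      pickMatrix φ l + diagonal (φ ∘ l) * pickMatrix ψ l * (diagonal (φ ∘ l))ᴴ := by
  ext i j
  simp only [pickMatrix, of_apply, Matrix.add_apply, diagonal_conjTranspose, mul_diagonal,
    diagonal_mul, Pi.star_apply, Function.comp_apply, star_mul']
  ring

theorem pickMatrix_div (φ ψ : ℂ → ℂ) (l : Fin N → ℂ) (hψ : ∀ i, ψ (l i) ≠ 0) :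
    pickMatrix (fun z => φ z / ψ z) l =
      diagonal (fun i => (ψ (l i))⁻¹) * (pickMatrix φ l - pickMatrix ψ l) *
        (diagonal fun i => (ψ (l i))⁻¹)ᴴ := by
  ext i j
  have hi := hψ i
  have hj : star (ψ (l j)) ≠ 0 := star_ne_zero.2 (hψ j)
  simp only [pickMatrix, of_apply, Matrix.sub_apply, diagonal_conjTranspose, mul_diagonal,
    diagonal_mul, Pi.star_apply, star_div₀, star_inv₀]
  field_simp
  ring

theorem pickMatrix_blaschkeFactor {a : ℂ} (ha : ‖a‖ < 1) {l : Fin N → ℂ}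
    (hl : ∀ i, ‖l i‖ < 1) :
    pickMatrix (blaschkeFactor a) l =
      vecMulVec (fun i => √(1 - ‖a‖ ^ 2) / (1 - conj a * l i))
        (star fun i => √(1 - ‖a‖ ^ 2) / (1 - conj a * l i)) := by
  ext i j
  have hd := one_sub_mul_conj_ne_zero (hl i) (hl j)
  have hs : (√(1 - ‖a‖ ^ 2) : ℂ) * √(1 - ‖a‖ ^ 2) = 1 - (‖a‖ : ℂ) ^ 2 := by
    rw [← Complex.ofReal_mul, Real.mul_self_sqrt (by nlinarith [norm_nonneg a]),
      Complex.ofReal_sub, Complex.ofReal_one, Complex.ofReal_pow]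
  simp only [pickMatrix, of_apply, vecMulVec_apply, Pi.star_apply, RCLike.star_def,
    one_sub_blaschkeFactor_mul_conj ha (hl i) (hl j), map_div₀, Complex.conj_ofReal]
  rw [mul_div_assoc, div_mul_div_comm, hs]
  field_simp

theorem exists_pickMatrix_blaschke_eq_mul_conjTranspose {m : ℕ} {c : ℂ} (hc : ‖c‖ = 1)
    {a : Fin m → ℂ} (ha : ∀ k, ‖a k‖ < 1) {l : Fin N → ℂ} (hl : ∀ i, ‖l i‖ < 1) :
    ∃ W : Matrix (Fin N) (Fin m) ℂ, pickMatrix (blaschke c a) l = W * Wᴴ := by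
  induction m with
  | zero =>
    have hconst : blaschke c a = fun _ => c := funext fun z => by simp [blaschke]
    exact ⟨0, by rw [hconst, pickMatrix_const hc, Matrix.zero_mul]⟩
  | succ m ih =>
    obtain ⟨W, hW⟩ := ih (a := Fin.tail a) fun k => ha k.succ
    set D := diagonal (blaschkeFactor (a 0) ∘ l) with hD
    refine ⟨of fun i => Fin.cons (√(1 - ‖a 0‖ ^ 2) / (1 - conj (a 0) * l i)) ((D * W) i),
      ?_⟩
    rw [show blaschke c a = _ from funext (blaschke_succ c a), pickMatrix_mul, hW,
      pickMatrix_blaschkeFactor (ha 0) hl, cons_mul_conjTranspose_cons, conjTranspose_mul]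
    simp only [Matrix.mul_assoc, hD]

end Pick

theorem stmt17_general {m n N : ℕ} (cf cg : ℂ) (hcf : ‖cf‖ = 1) (hcg : ‖cg‖ = 1)
    (a : Fin m → ℂ) (b : Fin n → ℂ)
    (ha : ∀ k, ‖a k‖ < 1) (hb : ∀ l, ‖b l‖ < 1)
    (l : Fin N → ℂ) (hl : ∀ i, ‖l i‖ < 1)
    (hgz : ∀ i, blaschke cg b (l i) ≠ 0)
    (hPk : (pickMatrix (fun z => blaschke cf a z / blaschke cg b z) l).IsHermitian) :
    posCount hPk ≤ m ∧ negCount hPk ≤ n := by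
  obtain ⟨Wf, hWf⟩ := exists_pickMatrix_blaschke_eq_mul_conjTranspose hcf ha hl
  obtain ⟨Wg, hWg⟩ := exists_pickMatrix_blaschke_eq_mul_conjTranspose hcg hb hl
  set D := diagonal fun i => (blaschke cg b (l i))⁻¹ with hD
  have hgram : pickMatrix (fun z => blaschke cf a z / blaschke cg b z) l =
      (D * Wf) * (D * Wf)ᴴ - (D * Wg) * (D * Wg)ᴴ := by
    rw [pickMatrix_div _ _ l hgz, hWf, hWg]
    simp only [conjTranspose_mul, Matrix.mul_sub, Matrix.sub_mul, Matrix.mul_assoc, hD]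
  simpa using hPk.posCount_le_and_negCount_le_of_eq_sub (D * Wf) (D * Wg) hgram

/-- if φ = f/g with f, g Blaschke products of degrees m, n without
common zeros, and the Pick matrix of φ at N points of 𝔻 avoiding the zeros of g has
π positive and ν negative eigenvalues, then m ≥ π and n ≥ ν. -/
theorem stmt17 {m n N : ℕ} (cf cg : ℂ) (hcf : ‖cf‖ = 1) (hcg : ‖cg‖ = 1)
    (a : Fin m → ℂ) (b : Fin n → ℂ)
    (ha : ∀ k, ‖a k‖ < 1) (hb : ∀ l, ‖b l‖ < 1)
    (hdisj : ∀ k l, a k ≠ b l)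
    (l : Fin N → ℂ) (hl : ∀ i, ‖l i‖ < 1) (hinj : Function.Injective l)
    (hgz : ∀ i, blaschke cg b (l i) ≠ 0)
    (hPk : (pickMatrix (fun z => blaschke cf a z / blaschke cg b z) l).IsHermitian) :
    posCount hPk ≤ m ∧ negCount hPk ≤ n :=
  stmt17_general cf cg hcf hcg a b ha hb l hl hgz hPk
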